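/- Let N ≥ 1, let 1 ≤ q < 2, let γ satisfy q ≤ γ < 2, let Ω ⊆ ℝ^N be an open set, and let w be a classical Lane–Emden solution on Ω such that ∫_Ω w^{(2−q)γ/(2−γ)} dx < ∞. Then for every smooth function φ : ℝ^N → ℝ with compact support contained in Ω one has ∫_Ω |φ|^γ dx ≤ (∫_Ω |∇φ|² dx)^{γ/2} · (∫_Ω w^{(2−q)γ/(2−γ)} dx)^{(2−γ)/2}. -/

import Mathlib

open MeasureTheory

/-- The Laplacian of a function on `ℝ^N`, computed as the sum of the second
partial derivatives along the coordinate directions. -/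
noncomputable def lap {N : ℕ} (f : EuclideanSpace ℝ (Fin N) → ℝ)
    (x : EuclideanSpace ℝ (Fin N)) : ℝ :=
  ∑ i : Fin N, fderiv ℝ (fun y => fderiv ℝ f y (EuclideanSpace.single i 1)) x
    (EuclideanSpace.single i 1)

/-- A classical Lane–Emden solution on an open set `Ω ⊆ ℝ^N`: twice continuously
differentiable on `Ω`, positive on `Ω`, and satisfying `-Δw = w^(q-1)` on `Ω`. -/
def IsLaneEmdenSolution {N : ℕ} (q : ℝ) (Ω : Set (EuclideanSpace ℝ (Fin N)))
    (w : EuclideanSpace ℝ (Fin N) → ℝ) : Prop :=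
  ContDiffOn ℝ 2 w Ω ∧ (∀ x ∈ Ω, 0 < w x) ∧ ∀ x ∈ Ω, -lap w x = w x ^ (q - 1)

/-!
Testing the equation against `φ² / w` and integrating by parts gives
`∫ φ² w^(q-2) = ∫ ∇(φ²/w) · ∇w`, and Picone's pointwise inequality
`∇(φ²/w) · ∇w ≤ |∇φ|²` (which is `|∇φ - (φ/w) ∇w|² ≥ 0`) bounds this by `∫ |∇φ|²`.
Hölder's inequality with exponents `2/γ` and `2/(2-γ)`, applied to the factorization
`|φ|^γ = (|φ|^γ w^(-(2-q)γ/2)) · w^((2-q)γ/2)`, then gives the claim.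
-/

theorem ContDiffOn.contDiff_of_tsupport_subset {E F : Type*} [NormedAddCommGroup E]
    [NormedSpace ℝ E] [NormedAddCommGroup F] [NormedSpace ℝ F] {f : E → F} {s : Set E}
    {n : WithTop ℕ∞} (hf : ContDiffOn ℝ n f s) (hs : IsOpen s) (h : tsupport f ⊆ s) :
    ContDiff ℝ n f := by
  refine contDiff_iff_contDiffAt.2 fun x => ?_
  by_cases hx : x ∈ tsupport f
  · exact hf.contDiffAt (hs.mem_nhds (h hx))
  · exact contDiffAt_const.congr_of_eventuallyEq (notMem_tsupport_iff_eventuallyEq.1 hx)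

theorem ContDiffOn.fderiv_apply_of_isOpen {E F : Type*} [NormedAddCommGroup E]
    [NormedSpace ℝ E] [NormedAddCommGroup F] [NormedSpace ℝ F] {f : E → F} {s : Set E}
    {m n : WithTop ℕ∞} (hf : ContDiffOn ℝ n f s) (hs : IsOpen s) (hmn : m + 1 ≤ n) (v : E) :
    ContDiffOn ℝ m (fun x => fderiv ℝ f x v) s :=
  (hf.fderiv_of_isOpen hs hmn).clm_apply contDiffOn_const

theorem Continuous.integrable_mul_of_tsupport_subset {X : Type*} [TopologicalSpace X]
    [MeasurableSpace X] [OpensMeasurableSpace X] {μ : Measure X} [IsFiniteMeasureOnCompacts μ]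
    {f g : X → ℝ} {s : Set X} (hf : Continuous f) (hfc : HasCompactSupport f)
    (hg : ContinuousOn g s) (hs : IsOpen s) (hfs : tsupport f ⊆ s) :
    Integrable (fun x => f x * g x) μ :=
  ((hf.continuousOn.mul hg).continuous_of_tsupport_subset hs
    (tsupport_mul_subset_left.trans hfs)).integrable_of_hasCompactSupport hfc.mul_right

theorem norm_gradient_sq_eq_sum {E ι : Type*} [NormedAddCommGroup E] [InnerProductSpace ℝ E]
    [CompleteSpace E] [Fintype ι] (b : OrthonormalBasis ι ℝ E) (φ : E → ℝ) (x : E) :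
    ‖gradient φ x‖ ^ 2 = ∑ i, fderiv ℝ φ x (b i) ^ 2 := by
  simp [← b.sum_sq_norm_inner_left, inner_gradient_left]

theorem fderiv_sq_div_apply_mul_le {E : Type*} [NormedAddCommGroup E] [NormedSpace ℝ E]
    {φ w : E → ℝ} {x : E} (hφ : DifferentiableAt ℝ φ x) (hw : DifferentiableAt ℝ w x)
    (hwx : 0 < w x) (v : E) :
    fderiv ℝ (fun y => φ y ^ 2 / w y) x v * fderiv ℝ w x v ≤ fderiv ℝ φ x v ^ 2 := by
  have hderiv : HasFDerivAt (fun y => φ y ^ 2 * (w y)⁻¹) _ x :=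
    (hφ.hasFDerivAt.pow 2).fun_mul ((hasFDerivAt_inv hwx.ne').comp x hw.hasFDerivAt)
  simp only [div_eq_mul_inv]
  rw [hderiv.fderiv]
  simp only [Nat.add_one_sub_one, pow_one, nsmul_eq_mul, Nat.cast_ofNat, add_apply, smul_apply,
    ContinuousLinearMap.comp_apply, ContinuousLinearMap.toSpanSingleton_apply, smul_eq_mul,
    mul_neg]
  field_simp
  nlinarith [sq_nonneg (w x * fderiv ℝ φ x v - φ x * fderiv ℝ w x v)]

section IntegrationByParts

variable {E : Type*} [NormedAddCommGroup E] [NormedSpace ℝ E] [MeasurableSpace E] [BorelSpace E]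
  {μ : Measure E} {Ω : Set E} {u w : E → ℝ}

theorem integrable_fderiv_apply_mul [IsFiniteMeasureOnCompacts μ] {g : E → ℝ} (hΩ : IsOpen Ω)
    (hg : ContinuousOn g Ω) (hu : ContDiff ℝ 1 u) (huc : HasCompactSupport u)
    (huΩ : tsupport u ⊆ Ω) (v : E) :
    Integrable (fun x => fderiv ℝ u x v * g x) μ :=
  ((hu.continuous_fderiv one_ne_zero).clm_apply continuous_const).integrable_mul_of_tsupport_subset
    (huc.fderiv_apply ℝ v) hg hΩ ((tsupport_fderiv_apply_subset ℝ v).trans huΩ)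

theorem integral_mul_fderiv_fderiv_eq_neg [FiniteDimensional ℝ E] [μ.IsAddHaarMeasure]
    (hΩ : IsOpen Ω) (hw : ContDiffOn ℝ 2 w Ω) (hu : ContDiff ℝ 1 u) (huc : HasCompactSupport u)
    (huΩ : tsupport u ⊆ Ω) (v : E) :
    ∫ x, u x * fderiv ℝ (fun y => fderiv ℝ w y v) x v ∂μ
      = -∫ x, fderiv ℝ u x v * fderiv ℝ w x v ∂μ := by
  have hw' : ContDiffOn ℝ 1 (fun y => fderiv ℝ w y v) Ω :=
    hw.fderiv_apply_of_isOpen hΩ (by norm_num) v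
  apply integral_mul_fderiv_eq_neg_fderiv_mul_of_integrable
  · exact integrable_fderiv_apply_mul hΩ hw'.continuousOn hu huc huΩ v
  · exact hu.continuous.integrable_mul_of_tsupport_subset huc
      ((hw'.continuousOn_fderiv_of_isOpen hΩ le_rfl).clm_apply continuousOn_const) hΩ huΩ
  · exact hu.continuous.integrable_mul_of_tsupport_subset huc hw'.continuousOn hΩ huΩ
  · exact fun x _ => hu.differentiable one_ne_zero x
  · exact fun x hx => (hw'.contDiffAt (hΩ.mem_nhds (huΩ hx))).differentiableAt one_ne_zero

end IntegrationByParts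

section Laplacian

variable {N : ℕ} {Ω : Set (EuclideanSpace ℝ (Fin N))} {u w φ : EuclideanSpace ℝ (Fin N) → ℝ}

theorem integral_mul_lap_eq_neg_sum (hΩ : IsOpen Ω) (hw : ContDiffOn ℝ 2 w Ω)
    (hu : ContDiff ℝ 1 u) (huc : HasCompactSupport u) (huΩ : tsupport u ⊆ Ω) :
    ∫ x, u x * lap w x = -∑ i, ∫ x, fderiv ℝ u x (EuclideanSpace.single i 1)
      * fderiv ℝ w x (EuclideanSpace.single i 1) := by
  have hsecond (v) : ContinuousOn (fun x => fderiv ℝ (fun y => fderiv ℝ w y v) x v) Ω :=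
    ((hw.fderiv_apply_of_isOpen hΩ (by norm_num) v).continuousOn_fderiv_of_isOpen hΩ
      le_rfl).clm_apply continuousOn_const
  simp only [lap, Finset.mul_sum]
  rw [integral_finsetSum _ fun i _ =>
      hu.continuous.integrable_mul_of_tsupport_subset huc (hsecond _) hΩ huΩ,
    ← Finset.sum_neg_distrib]
  exact Finset.sum_congr rfl fun i _ => integral_mul_fderiv_fderiv_eq_neg hΩ hw hu huc huΩ _

theorem integral_sq_div_mul_neg_lap_le (hΩ : IsOpen Ω) (hw : ContDiffOn ℝ 2 w Ω)
    (hwpos : ∀ x ∈ Ω, 0 < w x) (hφ : ContDiff ℝ 1 φ) (hφc : HasCompactSupport φ)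
    (hφΩ : tsupport φ ⊆ Ω) :
    ∫ x, φ x ^ 2 / w x * -lap w x ≤ ∫ x, ‖gradient φ x‖ ^ 2 := by
  set u := fun x => φ x ^ 2 / w x
  have huφ : Function.support u ⊆ tsupport φ := fun x hx =>
    subset_tsupport φ fun h => hx (by simp [u, h])
  have huΩ : tsupport u ⊆ Ω := (closure_minimal huφ (isClosed_tsupport φ)).trans hφΩ
  have huc : HasCompactSupport u := hφc.mono' huφ
  have hw1 : ContDiffOn ℝ 1 w Ω := hw.of_le one_le_two
  have hu : ContDiff ℝ 1 u :=
    ((hφ.pow 2).contDiffOn.div hw1 fun x hx => (hwpos x hx).ne').contDiff_of_tsupport_subset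
      hΩ huΩ
  have hsq (v) : Integrable (fun x => fderiv ℝ φ x v ^ 2) := by
    simpa only [sq] using integrable_fderiv_apply_mul isOpen_univ
      ((hφ.continuous_fderiv one_ne_zero).clm_apply continuous_const).continuousOn hφ hφc
      (Set.subset_univ _) v
  calc ∫ x, u x * -lap w x
      = ∑ i, ∫ x, fderiv ℝ u x (EuclideanSpace.single i 1)
          * fderiv ℝ w x (EuclideanSpace.single i 1) := by
        simp_rw [mul_neg]
        rw [integral_neg, integral_mul_lap_eq_neg_sum hΩ hw hu huc huΩ, neg_neg]
    _ ≤ ∑ i, ∫ x, fderiv ℝ φ x (EuclideanSpace.single i 1) ^ 2 := by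
        refine Finset.sum_le_sum fun i _ => integral_mono (integrable_fderiv_apply_mul hΩ
          ((hw1.continuousOn_fderiv_of_isOpen hΩ le_rfl).clm_apply continuousOn_const) hu huc huΩ _)
          (hsq _) fun x => ?_
        by_cases hx : x ∈ Ω
        · exact fderiv_sq_div_apply_mul_le (hφ.differentiable one_ne_zero x)
            ((hw1.contDiffAt (hΩ.mem_nhds hx)).differentiableAt one_ne_zero) (hwpos x hx) _
        · simp [fderiv_of_notMem_tsupport ℝ fun h => hx (huΩ h), sq_nonneg]
    _ = ∫ x, ‖gradient φ x‖ ^ 2 := by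
        rw [← integral_finsetSum _ fun i _ => hsq _]
        simp [norm_gradient_sq_eq_sum (EuclideanSpace.basisFun (Fin N) ℝ)]

theorem IsLaneEmdenSolution.setIntegral_sq_mul_rpow_le {q : ℝ} (hΩ : IsOpen Ω)
    (hw : IsLaneEmdenSolution q Ω w) (hφ : ContDiff ℝ 1 φ) (hφc : HasCompactSupport φ)
    (hφΩ : tsupport φ ⊆ Ω) :
    ∫ x in Ω, φ x ^ 2 * w x ^ (-(2 - q)) ≤ ∫ x in Ω, ‖gradient φ x‖ ^ 2 := by
  obtain ⟨hw2, hwpos, hwsol⟩ := hw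
  calc ∫ x in Ω, φ x ^ 2 * w x ^ (-(2 - q))
      = ∫ x in Ω, φ x ^ 2 / w x * -lap w x := by
        refine setIntegral_congr_fun hΩ.measurableSet fun x hx => ?_
        rw [hwsol x hx, neg_sub, show q - 2 = q - 1 - 1 by ring,
          Real.rpow_sub_one (hwpos x hx).ne']
        ring
    _ = ∫ x, φ x ^ 2 / w x * -lap w x :=
        setIntegral_eq_integral_of_forall_compl_eq_zero fun x hx => by
          simp [image_eq_zero_of_notMem_tsupport fun h => hx (hφΩ h)]
    _ ≤ ∫ x, ‖gradient φ x‖ ^ 2 := integral_sq_div_mul_neg_lap_le hΩ hw2 hwpos hφ hφc hφΩ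
    _ = ∫ x in Ω, ‖gradient φ x‖ ^ 2 :=
        (setIntegral_eq_integral_of_forall_compl_eq_zero fun x hx => by
          simp [gradient, fderiv_of_notMem_tsupport ℝ fun h => hx (hφΩ h)]).symm

end Laplacian

section Holder

variable {α : Type*} [MeasurableSpace α] {μ : Measure α}

theorem memLp_ofReal_of_integrable_rpow {F : α → ℝ} {p : ℝ} (hp : 0 < p)
    (hF : AEStronglyMeasurable F μ) (hF0 : 0 ≤ᵐ[μ] F) (hint : Integrable (fun x => F x ^ p) μ) :
    MemLp F (ENNReal.ofReal p) μ := by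
  refine (integrable_norm_rpow_iff hF (by simpa using hp) ENNReal.ofReal_ne_top).1 ?_
  rw [ENNReal.toReal_ofReal hp.le]
  refine hint.congr ?_
  filter_upwards [hF0] with x hx
  rw [Real.norm_of_nonneg hx]

theorem integral_abs_rpow_le_of_weight {f w : α → ℝ} {γ s : ℝ} (hγ0 : 0 < γ) (hγ2 : γ < 2)
    (hf : AEStronglyMeasurable f μ) (hw : AEStronglyMeasurable w μ) (hwpos : ∀ᵐ x ∂μ, 0 < w x)
    (hfw : Integrable (fun x => f x ^ 2 * w x ^ (-s)) μ)
    (hwint : Integrable (fun x => w x ^ (s * γ / (2 - γ))) μ) :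
    ∫ x, |f x| ^ γ ∂μ
      ≤ (∫ x, f x ^ 2 * w x ^ (-s) ∂μ) ^ (γ / 2)
        * (∫ x, w x ^ (s * γ / (2 - γ)) ∂μ) ^ ((2 - γ) / 2) := by
  set F := fun x => |f x| ^ γ * w x ^ (-s * γ / 2)
  set G := fun x => w x ^ (s * γ / 2)
  have hpq : (2 / γ).HolderConjugate (2 / (2 - γ)) := by
    rw [Real.holderConjugate_iff, inv_div, inv_div]
    exact ⟨by rw [lt_div_iff₀ hγ0]; linarith, by ring⟩
  have hFG : ∀ᵐ x ∂μ, F x * G x = |f x| ^ γ := by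
    filter_upwards [hwpos] with x hx
    rw [mul_assoc, ← Real.rpow_add hx, neg_mul, neg_div, neg_add_cancel, Real.rpow_zero,
      mul_one]
  have hFp : ∀ᵐ x ∂μ, F x ^ (2 / γ) = f x ^ 2 * w x ^ (-s) := by
    filter_upwards [hwpos] with x hx
    rw [Real.mul_rpow (by positivity) (by positivity), ← Real.rpow_mul (abs_nonneg _),
      ← Real.rpow_mul hx.le, mul_div_cancel₀ _ hγ0.ne', Real.rpow_two, sq_abs]
    congr 2
    field_simp
  have hGp : ∀ᵐ x ∂μ, G x ^ (2 / (2 - γ)) = w x ^ (s * γ / (2 - γ)) := by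
    filter_upwards [hwpos] with x hx
    rw [← Real.rpow_mul hx.le]
    congr 1
    field_simp
  have hF0 : 0 ≤ᵐ[μ] F := by
    filter_upwards [hwpos] with x hx
    positivity
  have hG0 : 0 ≤ᵐ[μ] G := by
    filter_upwards [hwpos] with x hx
    positivity
  have hFm : AEStronglyMeasurable F μ :=
    ((hf.aemeasurable.abs.pow_const γ).mul (hw.aemeasurable.pow_const _)).aestronglyMeasurable
  have hGm : AEStronglyMeasurable G μ := (hw.aemeasurable.pow_const _).aestronglyMeasurable
  calc ∫ x, |f x| ^ γ ∂μ = ∫ x, F x * G x ∂μ := integral_congr_ae (hFG.mono fun x hx => hx.symm)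
    _ ≤ (∫ x, F x ^ (2 / γ) ∂μ) ^ (1 / (2 / γ))
          * (∫ x, G x ^ (2 / (2 - γ)) ∂μ) ^ (1 / (2 / (2 - γ))) :=
        integral_mul_le_Lp_mul_Lq_of_nonneg hpq hF0 hG0
          (memLp_ofReal_of_integrable_rpow (by positivity) hFm hF0
            (hfw.congr (hFp.mono fun x hx => hx.symm)))
          (memLp_ofReal_of_integrable_rpow (div_pos two_pos (by linarith)) hGm hG0
            (hwint.congr (hGp.mono fun x hx => hx.symm)))
    _ = _ := by rw [integral_congr_ae hFp, integral_congr_ae hGp, one_div_div, one_div_div]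

end Holder

theorem sobolev_from_density_general {N : ℕ}
    {q γ : ℝ} (hq1 : 1 ≤ q) (hγ1 : q ≤ γ) (hγ2 : γ < 2)
    {Ω : Set (EuclideanSpace ℝ (Fin N))} (hΩ : IsOpen Ω)
    {w : EuclideanSpace ℝ (Fin N) → ℝ} (hw : IsLaneEmdenSolution q Ω w)
    (hint : IntegrableOn (fun x => w x ^ ((2 - q) * γ / (2 - γ))) Ω volume)
    (φ : EuclideanSpace ℝ (Fin N) → ℝ) (hφ : ContDiff ℝ (⊤ : ℕ∞) φ)
    (hφc : HasCompactSupport φ) (hφΩ : tsupport φ ⊆ Ω) :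
    (∫ x in Ω, |φ x| ^ γ)
      ≤ (∫ x in Ω, ‖gradient φ x‖ ^ 2) ^ (γ / 2)
        * (∫ x in Ω, w x ^ ((2 - q) * γ / (2 - γ))) ^ ((2 - γ) / 2) := by
  have hφ1 : ContDiff ℝ 1 φ := hφ.of_le (by exact_mod_cast le_top)
  have hpicone := hw.setIntegral_sq_mul_rpow_le hΩ hφ1 hφc hφΩ
  obtain ⟨hw2, hwpos, -⟩ := hw
  have hweight : IntegrableOn (fun x => φ x ^ 2 * w x ^ (-(2 - q))) Ω := by
    have hg : ContinuousOn (fun x => φ x * w x ^ (-(2 - q))) Ω :=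
      hφ1.continuous.continuousOn.mul
        (hw2.continuousOn.rpow_const fun x hx => Or.inl (hwpos x hx).ne')
    exact (hφ1.continuous.integrable_mul_of_tsupport_subset hφc hg hΩ hφΩ).integrableOn.congr_fun
      (fun x _ => by ring) hΩ.measurableSet
  have hholder := integral_abs_rpow_le_of_weight (μ := volume.restrict Ω) (s := 2 - q)
    (by linarith) hγ2 hφ1.continuous.aestronglyMeasurable
    (hw2.continuousOn.aestronglyMeasurable hΩ.measurableSet)
    (ae_restrict_of_forall_mem hΩ.measurableSet hwpos) hweight hint
  refine hholder.trans (mul_le_mul_of_nonneg_right ?_ (Real.rpow_nonneg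
    (setIntegral_nonneg hΩ.measurableSet fun x hx => Real.rpow_nonneg (hwpos x hx).le _) _))
  exact Real.rpow_le_rpow (setIntegral_nonneg hΩ.measurableSet fun x hx =>
    mul_nonneg (sq_nonneg _) (Real.rpow_nonneg (hwpos x hx).le _)) hpicone (by linarith)

/-- Integrability of the Lane–Emden density yields a Sobolev-type inequality. -/
theorem sobolev_from_density {N : ℕ} (hN : 1 ≤ N)
    {q γ : ℝ} (hq1 : 1 ≤ q) (hq2 : q < 2) (hγ1 : q ≤ γ) (hγ2 : γ < 2)
    {Ω : Set (EuclideanSpace ℝ (Fin N))} (hΩ : IsOpen Ω)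
    {w : EuclideanSpace ℝ (Fin N) → ℝ} (hw : IsLaneEmdenSolution q Ω w)
    (hint : IntegrableOn (fun x => w x ^ ((2 - q) * γ / (2 - γ))) Ω volume)
    (φ : EuclideanSpace ℝ (Fin N) → ℝ) (hφ : ContDiff ℝ (⊤ : ℕ∞) φ)
    (hφc : HasCompactSupport φ) (hφΩ : tsupport φ ⊆ Ω) :
    (∫ x in Ω, |φ x| ^ γ)
      ≤ (∫ x in Ω, ‖gradient φ x‖ ^ 2) ^ (γ / 2)
        * (∫ x in Ω, w x ^ ((2 - q) * γ / (2 - γ))) ^ ((2 - γ) / 2) :=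
  sobolev_from_density_general hq1 hγ1 hγ2 hΩ hw hint φ hφ hφc hφΩ
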